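/- arXiv:2105.04924 — 2 statements merged into one kernel-verified Lean document; each statement's English description precedes it below -/
import Mathlib

section
/- For a single RK step x̂_k = x_{k-1} - (A^{(i)}(x_{k-1} - x_⋆)/||A^{(i)}||^2)(A^{(i)})^T applied to the consistent system A x = A x_⋆, with row i chosen with probability ||A^{(i)}||^2/||A||_F^2, and v_ℓ a right singular vector of A with singular value σ_ℓ (A^T A v_ℓ = σ_ℓ^2 v_ℓ), the conditional expectation satisfies E_{k-1}[⟨x̂_k - x_⋆, v_ℓ⟩] = (1 - σ_ℓ^2/||A||_F^2) ⟨x_{k-1} - x_⋆, v_ℓ⟩. -/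
open Matrix BigOperators Finset

noncomputable def frob2 {m n : ℕ} (A : Matrix (Fin m) (Fin n) ℝ) : ℝ :=
  ∑ i, ∑ j, (A i j) ^ 2

noncomputable def rowNorm2 {m n : ℕ} (A : Matrix (Fin m) (Fin n) ℝ) (i : Fin m) : ℝ :=
  ∑ j, (A i j) ^ 2

/-- One RK step for the consistent system `A x = A x⋆` using row `i`:
`x ↦ x - (A^{(i)}(x - x⋆)/‖A^{(i)}‖²)(A^{(i)})ᵀ`. -/
noncomputable def projStep {m n : ℕ} (A : Matrix (Fin m) (Fin n) ℝ)
    (xs : Fin n → ℝ) (i : Fin m) (x : Fin n → ℝ) : Fin n → ℝ :=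
  x - ((A i ⬝ᵥ (x - xs)) / rowNorm2 A i) • A i

lemma rowNorm2_nonneg {m n : ℕ} (A : Matrix (Fin m) (Fin n) ℝ) (i : Fin m) :
    0 ≤ rowNorm2 A i :=
  Finset.sum_nonneg fun _ _ => sq_nonneg _

lemma row_eq_zero_of_rowNorm2_eq_zero {m n : ℕ} (A : Matrix (Fin m) (Fin n) ℝ)
    (i : Fin m) (h : rowNorm2 A i = 0) : ∀ j, A i j = 0 := by
  intro j
  have := (Finset.sum_eq_zero_iff_of_nonneg (fun j _ => sq_nonneg (A i j))).mp h j (by simp)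
  exact pow_eq_zero_iff (by norm_num) |>.mp this

lemma frob2_ne_zero {m n : ℕ} (A : Matrix (Fin m) (Fin n) ℝ) (hA : A ≠ 0) :
    frob2 A ≠ 0 := by
  intro h
  apply hA
  ext i j
  have hi : rowNorm2 A i = 0 :=
    (Finset.sum_eq_zero_iff_of_nonneg (fun i _ => rowNorm2_nonneg A i)).mp h i (by simp)
  simpa using row_eq_zero_of_rowNorm2_eq_zero A i hi j

lemma sum_dot_dot {m n : ℕ} (A : Matrix (Fin m) (Fin n) ℝ) (u v : Fin n → ℝ) :
    ∑ i, (A i ⬝ᵥ u) * (A i ⬝ᵥ v) = u ⬝ᵥ (Aᵀ *ᵥ (A *ᵥ v)) := by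
  rw [Matrix.dotProduct_mulVec, Matrix.vecMul_transpose]
  simp [dotProduct, Matrix.mulVec]

/-- for one RK step on `A x = A x⋆` with rows sampled with probability
`‖A^{(i)}‖²/‖A‖_F²`, if `Aᵀ A vℓ = σℓ² vℓ` then
`E[⟨x̂_k - x⋆, vℓ⟩] = (1 - σℓ²/‖A‖_F²) ⟨x_{k-1} - x⋆, vℓ⟩`. -/
theorem rk_rowstep_singular_contraction {m n : ℕ}
    (A : Matrix (Fin m) (Fin n) ℝ) (hA : A ≠ 0)
    (σ : ℝ) (hσ : 0 ≤ σ) (v : Fin n → ℝ)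
    (hv : Aᵀ *ᵥ (A *ᵥ v) = σ ^ 2 • v)
    (xs x : Fin n → ℝ) :
    ∑ i : Fin m, (rowNorm2 A i / frob2 A) * ((projStep A xs i x - xs) ⬝ᵥ v)
      = (1 - σ ^ 2 / frob2 A) * ((x - xs) ⬝ᵥ v) := by
  have hF : frob2 A ≠ 0 := frob2_ne_zero A hA
  have hsum : ∑ i, rowNorm2 A i = frob2 A := rfl
  have key : ∀ i, (rowNorm2 A i / frob2 A) * ((projStep A xs i x - xs) ⬝ᵥ v)
      = (rowNorm2 A i / frob2 A) * ((x - xs) ⬝ᵥ v)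
        - ((A i ⬝ᵥ (x - xs)) * (A i ⬝ᵥ v)) / frob2 A := by
    intro i
    have hdot : (projStep A xs i x - xs) ⬝ᵥ v
        = (x - xs) ⬝ᵥ v - ((A i ⬝ᵥ (x - xs)) / rowNorm2 A i) * (A i ⬝ᵥ v) := by
      simp [projStep, sub_dotProduct, smul_dotProduct, smul_eq_mul]
      ring
    rw [hdot]
    by_cases hr : rowNorm2 A i = 0
    · have h0 : A i ⬝ᵥ (x - xs) = 0 := by
        simp [dotProduct, fun j => row_eq_zero_of_rowNorm2_eq_zero A i hr j]
      simp [hr, h0]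
    · field_simp
  rw [Finset.sum_congr rfl (fun i _ => key i), Finset.sum_sub_distrib,
    ← Finset.sum_mul, ← Finset.sum_div, ← Finset.sum_div, hsum,
    sum_dot_dot A (x - xs) v, hv]
  have : (x - xs) ⬝ᵥ σ ^ 2 • v = σ ^ 2 * ((x - xs) ⬝ᵥ v) := by
    simp [dotProduct_smul]
  rw [this]
  field_simp
end

section
/- Let x_k be the k-th REK iterate (Algorithm 1) with x_0 ∈ range(A^T), z_0 ∈ b + range(A), and x_⋆ = A^† b. Then E[||x_k - x_⋆||^2] ≤ (1/||A||_F^2)(1 - σ_r^2/||A||_F^2)^k ||z_0 - (b - A x_⋆)||^2 + E[(1 - (1/||A||_F^2)||A(x_{k-1}-x_⋆)/||x_{k-1}-x_⋆|| ||^2) ||x_{k-1} - x_⋆||^2], where σ_r is the smallest nonzero singular value of A. -/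
open Matrix BigOperators Finset

noncomputable def colNorm2 {m n : ℕ} (A : Matrix (Fin m) (Fin n) ℝ) (j : Fin n) : ℝ :=
  ∑ i, (A i j) ^ 2

noncomputable def colStep {m n : ℕ} (A : Matrix (Fin m) (Fin n) ℝ) (j : Fin n)
    (z : Fin m → ℝ) : Fin m → ℝ :=
  z - ((Aᵀ j ⬝ᵥ z) / colNorm2 A j) • Aᵀ j

/-- One REK step: first an RK step on `Aᵀ z = 0` using column `j = p.1`, then an RK
step on `A x = b - z_k` using row `i = p.2` (with the freshly updated `z`). -/
noncomputable def rekStep {m n : ℕ} (A : Matrix (Fin m) (Fin n) ℝ)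
    (b : Fin m → ℝ) (p : Fin n × Fin m) (s : (Fin m → ℝ) × (Fin n → ℝ)) :
    (Fin m → ℝ) × (Fin n → ℝ) :=
  let z' := colStep A p.1 s.1
  (z', s.2 - ((A p.2 ⬝ᵥ s.2 - b p.2 + z' p.2) / rowNorm2 A p.2) • A p.2)

/-- REK iterates: the head of the list is the pair of indices of the most recent step. -/
noncomputable def rekIter {m n : ℕ} (A : Matrix (Fin m) (Fin n) ℝ)
    (b : Fin m → ℝ) (s0 : (Fin m → ℝ) × (Fin n → ℝ)) :
    List (Fin n × Fin m) → (Fin m → ℝ) × (Fin n → ℝ)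
  | [] => s0
  | p :: l => rekStep A b p (rekIter A b s0 l)

/-- Probability of choosing the index pair `p` at a given REK step. -/
noncomputable def rekProb {m n : ℕ} (A : Matrix (Fin m) (Fin n) ℝ)
    (p : Fin n × Fin m) : ℝ :=
  (colNorm2 A p.1 / frob2 A) * (rowNorm2 A p.2 / frob2 A)

/-! Since `Aᵀ (b - A x⋆) = 0`, the column steps run randomized Kaczmarz on `Aᵀ z = 0` for the
error `z_k - (b - A x⋆)`, which stays in `range A`; there one step shrinks its expected squared
norm by `1 - σ_r² / ‖A‖_F²`, because `‖Aᵀ A u‖² ≥ σ_r² ‖A u‖²`. A row step is a relaxed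
projection onto a hyperplane: conditionally on the past it changes `‖x - x⋆‖²` in expectation by
exactly `(‖z_k - (b - A x⋆)‖² - ‖A (x - x⋆)‖²) / ‖A‖_F²`. Averaging over the path and iterating
the contraction gives the bound. -/

open scoped InnerProductSpace

theorem Matrix.PosSemidef.mul_dotProduct_mulVec_le {ι : Type*} [Fintype ι] [DecidableEq ι]
    {B : Matrix ι ι ℝ} (hB : B.PosSemidef) {c : ℝ}
    (hc : ∀ (μ : ℝ) (v : ι → ℝ), v ≠ 0 → B *ᵥ v = μ • v → 0 < μ → c ≤ μ) (u : ι → ℝ) :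
    c * (u ⬝ᵥ B *ᵥ u) ≤ (B *ᵥ u) ⬝ᵥ (B *ᵥ u) := by
  set e := hB.1.eigenvectorBasis
  set μ := hB.1.eigenvalues
  have hBT : Bᵀ = B := by simpa using hB.1.eq
  set a : (ι → ℝ) → ι → ℝ := fun v i => (e i).ofLp ⬝ᵥ v
  have dotProduct_eq (v w : ι → ℝ) : v ⬝ᵥ w = ∑ i, a v i * a w i := calc
    v ⬝ᵥ w = ⟪WithLp.toLp 2 v, WithLp.toLp 2 w⟫_ℝ := by
      rw [EuclideanSpace.inner_toLp_toLp, star_trivial, dotProduct_comm]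
    _ = ∑ i, a v i * a w i := by
      rw [← e.sum_inner_mul_inner]
      simp only [a, EuclideanSpace.inner_eq_star_dotProduct, star_trivial, dotProduct_comm]
  have a_mulVec (i : ι) : a (B *ᵥ u) i = μ i * a u i := by
    simp only [a]
    rw [dotProduct_mulVec, ← mulVec_transpose, hBT, hB.1.mulVec_eigenvectorBasis, smul_dotProduct,
      smul_eq_mul]
  have gap (i : ι) : c * μ i ≤ μ i ^ 2 := by
    rcases (hB.eigenvalues_nonneg i).eq_or_lt with h | h
    · rw [show μ i = 0 from h.symm]; simp
    · have := hc (μ i) (e i) (fun h0 => e.orthonormal.ne_zero i (by ext j; exact congrFun h0 j))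
        (hB.1.mulVec_eigenvectorBasis i) h
      nlinarith
  rw [dotProduct_eq, dotProduct_eq, mul_sum]
  refine sum_le_sum fun i _ => ?_
  rw [a_mulVec]
  nlinarith [gap i, sq_nonneg (a u i)]

theorem dotProduct_self_sub_div_smul {ι : Type*} [Fintype ι] (a e : ι → ℝ) (s : ℝ) :
    (e - ((a ⬝ᵥ e + s) / (a ⬝ᵥ a)) • a) ⬝ᵥ (e - ((a ⬝ᵥ e + s) / (a ⬝ᵥ a)) • a)
      = e ⬝ᵥ e + (s ^ 2 - (a ⬝ᵥ e) ^ 2) / (a ⬝ᵥ a) := by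
  rcases eq_or_ne a 0 with rfl | ha
  · simp
  have haa : a ⬝ᵥ a ≠ 0 := dotProduct_self_eq_zero.not.mpr ha
  simp only [sub_dotProduct, dotProduct_sub, smul_dotProduct, dotProduct_smul, smul_eq_mul,
    dotProduct_comm e a]
  field_simp
  ring

theorem sum_div_mul_div_of_eq_zero {ι : Type*} [Fintype ι] (c g : ι → ℝ) (F : ℝ)
    (hg : ∀ i, c i = 0 → g i = 0) :
    ∑ i, c i / F * (g i / c i) = (∑ i, g i) / F := by
  rw [sum_div]
  refine sum_congr rfl fun i _ => ?_
  rcases eq_or_ne (c i) 0 with h | h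
  · simp [h, hg i h]
  · field_simp

section PathExpect

variable {α : Type*} [Fintype α] (P : α → ℝ)

/-- The expectation of `f` over `k` independent draws with weights `P`, listed most recent
first as in `rekIter`. -/
noncomputable def pathExpect (k : ℕ) (f : List α → ℝ) : ℝ :=
  ∑ ω : Fin k → α, (∏ t, P (ω t)) * f (List.ofFn ω)

theorem pathExpect_zero (f : List α → ℝ) : pathExpect P 0 f = f [] := by
  simp [pathExpect]

theorem pathExpect_succ (k : ℕ) (f : List α → ℝ) :
    pathExpect P (k + 1) f = pathExpect P k fun l => ∑ a, P a * f (a :: l) := by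
  simp only [pathExpect, mul_sum]
  rw [← (Fin.consEquiv fun _ => α).sum_comp, Fintype.sum_prod_type, sum_comm]
  refine sum_congr rfl fun ω _ => sum_congr rfl fun a _ => ?_
  simp only [Fin.consEquiv_apply, Fin.prod_univ_succ, Fin.cons_zero, Fin.cons_succ,
    List.ofFn_succ]
  ring

theorem pathExpect_add (k : ℕ) (f g : List α → ℝ) :
    pathExpect P k (fun l => f l + g l) = pathExpect P k f + pathExpect P k g := by
  simp only [pathExpect, mul_add, sum_add_distrib]

theorem pathExpect_const_mul (k : ℕ) (c : ℝ) (f : List α → ℝ) :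
    pathExpect P k (fun l => c * f l) = c * pathExpect P k f := by
  simp only [pathExpect, mul_sum]
  exact sum_congr rfl fun ω _ => by ring

theorem pathExpect_mono {P} (hP : ∀ a, 0 ≤ P a) (k : ℕ) {f g : List α → ℝ}
    (hfg : ∀ l, f l ≤ g l) : pathExpect P k f ≤ pathExpect P k g :=
  sum_le_sum fun ω _ =>
    mul_le_mul_of_nonneg_left (hfg _) (prod_nonneg fun t _ => hP (ω t))

end PathExpect

def positiveSingularValues {m n : ℕ} (A : Matrix (Fin m) (Fin n) ℝ) : Set ℝ :=
  {σ : ℝ | 0 < σ ∧ ∃ u, u ≠ 0 ∧ Aᵀ *ᵥ (A *ᵥ u) = σ ^ 2 • u}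

section Frobenius

variable {m n : ℕ} (A : Matrix (Fin m) (Fin n) ℝ)

theorem colNorm2_eq_dotProduct (j : Fin n) : colNorm2 A j = Aᵀ j ⬝ᵥ Aᵀ j := by
  simp [colNorm2, dotProduct, sq]

theorem rowNorm2_eq_dotProduct (i : Fin m) : rowNorm2 A i = A i ⬝ᵥ A i := by
  simp [rowNorm2, dotProduct, sq]

theorem frob2_eq_sum_colNorm2 : frob2 A = ∑ j, colNorm2 A j := by
  rw [frob2, sum_comm]; rfl

theorem frob2_eq_sum_rowNorm2 : frob2 A = ∑ i, rowNorm2 A i := rfl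

theorem frob2_pos (hA : A ≠ 0) : 0 < frob2 A := by
  obtain ⟨i, j, hij⟩ : ∃ i j, A i j ≠ 0 := by
    by_contra! h
    exact hA (Matrix.ext h)
  calc 0 < A i j ^ 2 := by positivity
    _ ≤ rowNorm2 A i := single_le_sum (fun j _ => sq_nonneg (A i j)) (mem_univ j)
    _ ≤ frob2 A := single_le_sum (fun i _ => sum_nonneg fun j _ => sq_nonneg (A i j)) (mem_univ i)

theorem sum_colNorm2_div_frob2 (hA : A ≠ 0) : ∑ j, colNorm2 A j / frob2 A = 1 := by
  rw [← sum_div, ← frob2_eq_sum_colNorm2, div_self (frob2_pos A hA).ne']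

theorem sum_rowNorm2_div_frob2 (hA : A ≠ 0) : ∑ i, rowNorm2 A i / frob2 A = 1 := by
  rw [← sum_div, ← frob2_eq_sum_rowNorm2, div_self (frob2_pos A hA).ne']

theorem mulVec_dotProduct_self_le (u : Fin n → ℝ) :
    (A *ᵥ u) ⬝ᵥ (A *ᵥ u) ≤ frob2 A * (u ⬝ᵥ u) := by
  rw [frob2_eq_sum_rowNorm2, sum_mul]
  refine sum_le_sum fun i _ => ?_
  simpa [mulVec, dotProduct, rowNorm2, sq] using sum_mul_sq_le_sq_mul_sq univ (A i) u

theorem sq_le_frob2_of_mem_positiveSingularValues {σ : ℝ} (hσ : σ ∈ positiveSingularValues A) :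
    σ ^ 2 ≤ frob2 A := by
  obtain ⟨-, u, hu, hAu⟩ := hσ
  have hquad : σ ^ 2 * (u ⬝ᵥ u) = (A *ᵥ u) ⬝ᵥ (A *ᵥ u) := by
    rw [← smul_eq_mul, ← smul_dotProduct, ← hAu, dotProduct_comm, dotProduct_mulVec,
      ← mulVec_transpose, transpose_transpose]
  have huu : 0 < u ⬝ᵥ u := by simpa using dotProduct_self_star_pos_iff.mpr hu
  nlinarith [mulVec_dotProduct_self_le A u]

theorem sq_mul_dotProduct_le_of_isLeast {σ : ℝ} (hσ : IsLeast (positiveSingularValues A) σ)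
    (u : Fin n → ℝ) :
    σ ^ 2 * ((A *ᵥ u) ⬝ᵥ (A *ᵥ u)) ≤ (Aᵀ *ᵥ (A *ᵥ u)) ⬝ᵥ (Aᵀ *ᵥ (A *ᵥ u)) := by
  have hquad : u ⬝ᵥ (Aᵀ * A) *ᵥ u = (A *ᵥ u) ⬝ᵥ (A *ᵥ u) := by
    rw [← mulVec_mulVec, dotProduct_mulVec, vecMul_transpose]
  rw [← hquad, mulVec_mulVec]
  refine (posSemidef_conjTranspose_mul_self A).mul_dotProduct_mulVec_le (fun μ v hv hAv hμ => ?_) u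
  have hmem : √μ ∈ positiveSingularValues A :=
    ⟨Real.sqrt_pos.mpr hμ, v, hv, by rw [Real.sq_sqrt hμ.le, mulVec_mulVec]; exact hAv⟩
  calc σ ^ 2 ≤ √μ ^ 2 := pow_le_pow_left₀ hσ.1.1.le (hσ.2 hmem) 2
    _ = μ := Real.sq_sqrt hμ.le

end Frobenius

section ColumnStep

variable {m n : ℕ} (A : Matrix (Fin m) (Fin n) ℝ)

theorem colStep_sub {r : Fin m → ℝ} (hr : Aᵀ *ᵥ r = 0) (j : Fin n) (z : Fin m → ℝ) :
    colStep A j z - r = colStep A j (z - r) := by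
  have hjr : Aᵀ j ⬝ᵥ r = 0 := congrFun hr j
  simp only [colStep, dotProduct_sub, hjr, sub_zero]
  abel

theorem colStep_mem_range {w : Fin m → ℝ} (hw : w ∈ LinearMap.range A.mulVecLin) (j : Fin n) :
    colStep A j w ∈ LinearMap.range A.mulVecLin := by
  have hcol : Aᵀ j ∈ LinearMap.range A.mulVecLin := ⟨Pi.single j 1, mulVec_single_one A j⟩
  exact sub_mem hw (Submodule.smul_mem _ _ hcol)

theorem colStep_dotProduct_self (j : Fin n) (w : Fin m → ℝ) :
    colStep A j w ⬝ᵥ colStep A j w = w ⬝ᵥ w - (Aᵀ j ⬝ᵥ w) ^ 2 / colNorm2 A j := by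
  simpa [colStep, colNorm2_eq_dotProduct, neg_div, ← sub_eq_add_neg]
    using dotProduct_self_sub_div_smul (Aᵀ j) w 0

theorem sum_colNorm2_div_mul_colStep (hA : A ≠ 0) (w : Fin m → ℝ) :
    ∑ j, colNorm2 A j / frob2 A * (colStep A j w ⬝ᵥ colStep A j w)
      = w ⬝ᵥ w - (Aᵀ *ᵥ w) ⬝ᵥ (Aᵀ *ᵥ w) / frob2 A := by
  have hzero (j : Fin n) (hj : colNorm2 A j = 0) : (Aᵀ j ⬝ᵥ w) ^ 2 = 0 := by
    rw [colNorm2_eq_dotProduct, dotProduct_self_eq_zero] at hj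
    simp [hj]
  simp only [colStep_dotProduct_self, mul_sub, sum_sub_distrib, ← sum_mul,
    sum_colNorm2_div_frob2 A hA, one_mul, sum_div_mul_div_of_eq_zero _ _ _ hzero]
  simp [dotProduct, mulVec, sq]

theorem sum_colNorm2_div_mul_colStep_le (hA : A ≠ 0) {σ : ℝ}
    (hσ : IsLeast (positiveSingularValues A) σ) {w : Fin m → ℝ}
    (hw : w ∈ LinearMap.range A.mulVecLin) :
    ∑ j, colNorm2 A j / frob2 A * (colStep A j w ⬝ᵥ colStep A j w)
      ≤ (1 - σ ^ 2 / frob2 A) * (w ⬝ᵥ w) := by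
  obtain ⟨u, rfl⟩ := hw
  rw [sum_colNorm2_div_mul_colStep A hA, sub_mul, one_mul, div_mul_eq_mul_div]
  gcongr
  · exact (frob2_pos A hA).le
  · exact sq_mul_dotProduct_le_of_isLeast A hσ u

end ColumnStep

section Rek

variable {m n : ℕ} (A : Matrix (Fin m) (Fin n) ℝ) (b : Fin m → ℝ)

@[simp]
theorem rekStep_fst (p : Fin n × Fin m) (s : (Fin m → ℝ) × (Fin n → ℝ)) :
    (rekStep A b p s).1 = colStep A p.1 s.1 := rfl

theorem rekProb_nonneg (p : Fin n × Fin m) : 0 ≤ rekProb A p := by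
  unfold rekProb colNorm2 rowNorm2 frob2
  positivity

theorem sum_rekProb_mul_fst (hA : A ≠ 0) (f : Fin n → ℝ) :
    ∑ p, rekProb A p * f p.1 = ∑ j, colNorm2 A j / frob2 A * f j := by
  simp only [rekProb, Fintype.sum_prod_type, mul_comm (colNorm2 A _ / frob2 A), mul_assoc,
    ← sum_mul, sum_rowNorm2_div_frob2 A hA, one_mul]

theorem rekIter_fst_sub_mem_range {r : Fin m → ℝ} (hr : Aᵀ *ᵥ r = 0)
    {s₀ : (Fin m → ℝ) × (Fin n → ℝ)} (hs₀ : s₀.1 - r ∈ LinearMap.range A.mulVecLin)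
    (l : List (Fin n × Fin m)) : (rekIter A b s₀ l).1 - r ∈ LinearMap.range A.mulVecLin := by
  induction l with
  | nil => exact hs₀
  | cons p l ih =>
    rw [rekIter, rekStep_fst, colStep_sub A hr]
    exact colStep_mem_range A ih p.1

theorem pathExpect_rekIter_fst_le (hA : A ≠ 0) {σ : ℝ}
    (hσ : IsLeast (positiveSingularValues A) σ) {r : Fin m → ℝ} (hr : Aᵀ *ᵥ r = 0)
    {s₀ : (Fin m → ℝ) × (Fin n → ℝ)} (hs₀ : s₀.1 - r ∈ LinearMap.range A.mulVecLin) (k : ℕ) :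
    pathExpect (rekProb A) k (fun l => ((rekIter A b s₀ l).1 - r) ⬝ᵥ ((rekIter A b s₀ l).1 - r))
      ≤ (1 - σ ^ 2 / frob2 A) ^ k * ((s₀.1 - r) ⬝ᵥ (s₀.1 - r)) := by
  set q := 1 - σ ^ 2 / frob2 A
  have hq : 0 ≤ q :=
    sub_nonneg.mpr (div_le_one_of_le₀ (sq_le_frob2_of_mem_positiveSingularValues A hσ.1)
      (frob2_pos A hA).le)
  have step (l : List (Fin n × Fin m)) :
      ∑ p, rekProb A p * (((rekIter A b s₀ (p :: l)).1 - r) ⬝ᵥ ((rekIter A b s₀ (p :: l)).1 - r))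
        ≤ q * (((rekIter A b s₀ l).1 - r) ⬝ᵥ ((rekIter A b s₀ l).1 - r)) := by
    simp only [rekIter, rekStep_fst, colStep_sub A hr]
    rw [sum_rekProb_mul_fst A hA fun j =>
      colStep A j ((rekIter A b s₀ l).1 - r) ⬝ᵥ colStep A j ((rekIter A b s₀ l).1 - r)]
    exact sum_colNorm2_div_mul_colStep_le A hA hσ (rekIter_fst_sub_mem_range A b hr hs₀ l)
  induction k with
  | zero => simp [pathExpect_zero, rekIter]
  | succ k ih =>
    rw [pathExpect_succ]
    calc _ ≤ pathExpect (rekProb A) k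
          (fun l => q * (((rekIter A b s₀ l).1 - r) ⬝ᵥ ((rekIter A b s₀ l).1 - r))) :=
          pathExpect_mono (rekProb_nonneg A) k step
      _ ≤ q * (q ^ k * ((s₀.1 - r) ⬝ᵥ (s₀.1 - r))) := by
          rw [pathExpect_const_mul]
          exact mul_le_mul_of_nonneg_left ih hq
      _ = q ^ (k + 1) * ((s₀.1 - r) ⬝ᵥ (s₀.1 - r)) := by ring

end Rek

section RowStep

variable {m n : ℕ} (A : Matrix (Fin m) (Fin n) ℝ) (b : Fin m → ℝ) (xs : Fin n → ℝ)

theorem rekStep_snd_sub_dotProduct_self (j : Fin n) (i : Fin m)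
    (s : (Fin m → ℝ) × (Fin n → ℝ)) :
    ((rekStep A b (j, i) s).2 - xs) ⬝ᵥ ((rekStep A b (j, i) s).2 - xs)
      = (s.2 - xs) ⬝ᵥ (s.2 - xs)
        + ((colStep A j s.1 - (b - A *ᵥ xs)) i ^ 2 - (A i ⬝ᵥ (s.2 - xs)) ^ 2) / rowNorm2 A i := by
  have hstep : (rekStep A b (j, i) s).2 - xs = (s.2 - xs)
      - ((A i ⬝ᵥ (s.2 - xs) + (colStep A j s.1 - (b - A *ᵥ xs)) i) / (A i ⬝ᵥ A i)) • A i := by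
    simp only [rekStep, rowNorm2_eq_dotProduct, dotProduct_sub, Pi.sub_apply]
    rw [show (A *ᵥ xs) i = A i ⬝ᵥ xs from rfl]
    ring_nf
  rw [hstep, dotProduct_self_sub_div_smul, rowNorm2_eq_dotProduct]

theorem sum_rekProb_mul_rekStep_snd (hA : A ≠ 0) (hls : Aᵀ *ᵥ (b - A *ᵥ xs) = 0)
    (s : (Fin m → ℝ) × (Fin n → ℝ)) (hs : s.1 - (b - A *ᵥ xs) ∈ LinearMap.range A.mulVecLin) :
    ∑ p, rekProb A p * (((rekStep A b p s).2 - xs) ⬝ᵥ ((rekStep A b p s).2 - xs))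
      = ((s.2 - xs) ⬝ᵥ (s.2 - xs) - 1 / frob2 A * ((A *ᵥ (s.2 - xs)) ⬝ᵥ (A *ᵥ (s.2 - xs))))
        + 1 / frob2 A * ∑ p, rekProb A p *
          (((rekStep A b p s).1 - (b - A *ᵥ xs)) ⬝ᵥ ((rekStep A b p s).1 - (b - A *ᵥ xs))) := by
  set r := b - A *ᵥ xs
  set e := s.2 - xs
  have hrow (j : Fin n) :
      ∑ i, rowNorm2 A i / frob2 A *
          (((rekStep A b (j, i) s).2 - xs) ⬝ᵥ ((rekStep A b (j, i) s).2 - xs))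
        = e ⬝ᵥ e + ((colStep A j s.1 - r) ⬝ᵥ (colStep A j s.1 - r) - (A *ᵥ e) ⬝ᵥ (A *ᵥ e))
          / frob2 A := by
    obtain ⟨v, hv⟩ := colStep_sub A hls j s.1 ▸ colStep_mem_range A hs j
    have hzero (i : Fin m) (hi : rowNorm2 A i = 0) :
        (colStep A j s.1 - r) i ^ 2 - (A i ⬝ᵥ e) ^ 2 = 0 := by
      rw [rowNorm2_eq_dotProduct, dotProduct_self_eq_zero] at hi
      rw [← hv]
      simp [mulVec, hi]
    simp only [rekStep_snd_sub_dotProduct_self, mul_add, sum_add_distrib, ← sum_mul,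
      sum_rowNorm2_div_frob2 A hA, one_mul]
    rw [sum_div_mul_div_of_eq_zero _ _ _ hzero, sum_sub_distrib]
    simp only [dotProduct, mulVec, sq]
    rfl
  have hsplit (j : Fin n) :
      colNorm2 A j / frob2 A * (e ⬝ᵥ e
        + ((colStep A j s.1 - r) ⬝ᵥ (colStep A j s.1 - r) - (A *ᵥ e) ⬝ᵥ (A *ᵥ e)) / frob2 A)
      = colNorm2 A j / frob2 A * (e ⬝ᵥ e - 1 / frob2 A * ((A *ᵥ e) ⬝ᵥ (A *ᵥ e)))
        + 1 / frob2 A *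
            (colNorm2 A j / frob2 A * ((colStep A j s.1 - r) ⬝ᵥ (colStep A j s.1 - r))) := by
    ring
  simp only [rekStep_fst]
  rw [sum_rekProb_mul_fst A hA fun j => (colStep A j s.1 - r) ⬝ᵥ (colStep A j s.1 - r),
    Fintype.sum_prod_type]
  simp only [rekProb, mul_assoc, ← mul_sum, hrow, hsplit, sum_add_distrib, ← sum_mul,
    sum_colNorm2_div_frob2 A hA, one_mul]

theorem pathExpect_rekIter_snd_le (hA : A ≠ 0) {σ : ℝ}
    (hσ : IsLeast (positiveSingularValues A) σ) (hls : Aᵀ *ᵥ (b - A *ᵥ xs) = 0)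
    {s₀ : (Fin m → ℝ) × (Fin n → ℝ)} (hs₀ : s₀.1 - (b - A *ᵥ xs) ∈ LinearMap.range A.mulVecLin)
    (k : ℕ) :
    pathExpect (rekProb A) (k + 1)
        (fun l => ((rekIter A b s₀ l).2 - xs) ⬝ᵥ ((rekIter A b s₀ l).2 - xs))
      ≤ 1 / frob2 A * (1 - σ ^ 2 / frob2 A) ^ (k + 1)
          * ((s₀.1 - (b - A *ᵥ xs)) ⬝ᵥ (s₀.1 - (b - A *ᵥ xs)))
        + pathExpect (rekProb A) k (fun l =>
            ((rekIter A b s₀ l).2 - xs) ⬝ᵥ ((rekIter A b s₀ l).2 - xs)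
              - 1 / frob2 A * ((A *ᵥ ((rekIter A b s₀ l).2 - xs)) ⬝ᵥ
                (A *ᵥ ((rekIter A b s₀ l).2 - xs)))) := by
  have hz := pathExpect_rekIter_fst_le A b hA hσ hls hs₀ (k + 1)
  rw [pathExpect_succ] at hz ⊢
  simp only [rekIter] at hz ⊢
  simp only [sum_rekProb_mul_rekStep_snd A b xs hA hls _
    (rekIter_fst_sub_mem_range A b hls hs₀ _), pathExpect_add, pathExpect_const_mul]
  have := mul_le_mul_of_nonneg_left hz (one_div_nonneg.2 (frob2_pos A hA).le)
  linarith

end RowStep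

theorem rek_squared_error_bound_general {m n : ℕ}
    (A : Matrix (Fin m) (Fin n) ℝ) (hA : A ≠ 0)
    (σr : ℝ)
    (hσr : IsLeast {σ : ℝ | 0 < σ ∧ ∃ u, u ≠ 0 ∧ Aᵀ *ᵥ (A *ᵥ u) = σ ^ 2 • u} σr)
    (b : Fin m → ℝ) (xs : Fin n → ℝ)
    (hls : Aᵀ *ᵥ (b - A *ᵥ xs) = 0)
    (x0 : Fin n → ℝ)
    (z0 : Fin m → ℝ) (hz0 : ∃ y, z0 = b + A *ᵥ y)
    (k : ℕ) (hk : 0 < k) :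
    ∑ ω : Fin k → Fin n × Fin m,
        (∏ t, rekProb A (ω t)) *
          (((rekIter A b (z0, x0) (List.ofFn ω)).2 - xs) ⬝ᵥ
            ((rekIter A b (z0, x0) (List.ofFn ω)).2 - xs))
      ≤ (1 / frob2 A) * (1 - σr ^ 2 / frob2 A) ^ k
          * ((z0 - (b - A *ᵥ xs)) ⬝ᵥ (z0 - (b - A *ᵥ xs)))
        + ∑ ω' : Fin (k - 1) → Fin n × Fin m,
            (∏ t, rekProb A (ω' t)) *
              ((((rekIter A b (z0, x0) (List.ofFn ω')).2 - xs) ⬝ᵥ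
                  ((rekIter A b (z0, x0) (List.ofFn ω')).2 - xs))
                - (1 / frob2 A) *
                  ((A *ᵥ ((rekIter A b (z0, x0) (List.ofFn ω')).2 - xs)) ⬝ᵥ
                    (A *ᵥ ((rekIter A b (z0, x0) (List.ofFn ω')).2 - xs)))) := by
  obtain ⟨k, rfl⟩ := Nat.exists_eq_add_one_of_ne_zero hk.ne'
  have hz0r : z0 - (b - A *ᵥ xs) ∈ LinearMap.range A.mulVecLin := by
    obtain ⟨y, rfl⟩ := hz0
    exact ⟨y + xs, by simp [mulVec_add]⟩
  exact pathExpect_rekIter_snd_le A b xs hA hσr hls (s₀ := (z0, x0)) hz0r k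

/-- Theorem 3: with `σr` the smallest nonzero singular value of `A`
(characterized as the least element of the set of nonzero singular values, i.e.
`σ > 0` such that `σ²` is an eigenvalue of `AᵀA`), the REK iterates satisfy
`E[‖x_k - x⋆‖²] ≤ (1/‖A‖_F²)(1-σr²/‖A‖_F²)^k ‖z_0-(b-Ax⋆)‖²
  + E[‖x_{k-1}-x⋆‖² - ‖A(x_{k-1}-x⋆)‖²/‖A‖_F²]`,
the second term being the stated interpretation of
`E[(1 - ‖A(x_{k-1}-x⋆)/‖x_{k-1}-x⋆‖‖²/‖A‖_F²)‖x_{k-1}-x⋆‖²]`. -/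
theorem rek_squared_error_bound {m n : ℕ}
    (A : Matrix (Fin m) (Fin n) ℝ) (hA : A ≠ 0)
    (σr : ℝ)
    (hσr : IsLeast {σ : ℝ | 0 < σ ∧ ∃ u, u ≠ 0 ∧ Aᵀ *ᵥ (A *ᵥ u) = σ ^ 2 • u} σr)
    (b : Fin m → ℝ) (xs : Fin n → ℝ)
    (hls : Aᵀ *ᵥ (b - A *ᵥ xs) = 0) (hxs : ∃ y, xs = Aᵀ *ᵥ y)
    (x0 : Fin n → ℝ) (hx0 : ∃ u, x0 = Aᵀ *ᵥ u)
    (z0 : Fin m → ℝ) (hz0 : ∃ y, z0 = b + A *ᵥ y)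
    (k : ℕ) (hk : 0 < k) :
    ∑ ω : Fin k → Fin n × Fin m,
        (∏ t, rekProb A (ω t)) *
          (((rekIter A b (z0, x0) (List.ofFn ω)).2 - xs) ⬝ᵥ
            ((rekIter A b (z0, x0) (List.ofFn ω)).2 - xs))
      ≤ (1 / frob2 A) * (1 - σr ^ 2 / frob2 A) ^ k
          * ((z0 - (b - A *ᵥ xs)) ⬝ᵥ (z0 - (b - A *ᵥ xs)))
        + ∑ ω' : Fin (k - 1) → Fin n × Fin m,
            (∏ t, rekProb A (ω' t)) *
              ((((rekIter A b (z0, x0) (List.ofFn ω')).2 - xs) ⬝ᵥ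
                  ((rekIter A b (z0, x0) (List.ofFn ω')).2 - xs))
                - (1 / frob2 A) *
                  ((A *ᵥ ((rekIter A b (z0, x0) (List.ofFn ω')).2 - xs)) ⬝ᵥ
                    (A *ᵥ ((rekIter A b (z0, x0) (List.ofFn ω')).2 - xs)))) :=
  rek_squared_error_bound_general A hA σr hσr b xs hls x0 z0 hz0 k hk
end
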